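/- arXiv:2002.01242 — 2 statements merged into one kernel-verified Lean document; each statement's English description precedes it below -/
import Mathlib

section
/- For real numbers d > 0 and positive real k with d ≥ k², if e > d²/(2k) + dk/2 then (9e² - 8d³)/(4d²) > 9(k² - d)²/(16k²) + d/4. -/
theorem wall_radius_bound (d k e : ℝ) (hd : 0 < d) (hk : 0 < k)
    (hdk : k ^ 2 ≤ d) (he : e > d ^ 2 / (2 * k) + d * k / 2) :
    (9 * e ^ 2 - 8 * d ^ 3) / (4 * d ^ 2) >
      9 * (k ^ 2 - d) ^ 2 / (16 * k ^ 2) + d / 4 := by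
  have h0 : 0 < d ^ 2 / (2 * k) + d * k / 2 := by positivity
  have he2 : e ^ 2 > (d ^ 2 / (2 * k) + d * k / 2) ^ 2 := by
    nlinarith
  rw [gt_iff_lt, div_add' _ _ _ (by positivity : (16 * k ^ 2 : ℝ) ≠ 0),
    div_lt_div_iff₀ (by positivity) (by positivity)]
  have h3 : (d ^ 2 / (2 * k) + d * k / 2) ^ 2 = (d ^ 2 + d * k ^ 2) ^ 2 / (4 * k ^ 2) := by
    field_simp; ring
  rw [h3] at he2
  nlinarith [mul_pos hd (mul_pos hd hk), sq_nonneg k, (div_lt_iff₀ (by positivity : (0:ℝ) < 4 * k ^ 2)).mp he2]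
end

section
/- Let (0, c, d, e) be the Chern character of a rank-zero object with c > 0 real. The inequality Q_{α,β} = α²c² + 4(d - βc)² - 6c(e - βd + β²c/2) ≥ 0 for all (α, β) with α² + (β - d/c)² ≤ c²/4 and α > 0 implies e ≤ c³/24 + d²/(2c). -/
lemma rankZero_quadraticForm_at_apex {c : ℝ} (hc : c ≠ 0) (d e : ℝ) :
    (c / 2) ^ 2 * c ^ 2 + 4 * (d - d / c * c) ^ 2 - 6 * c * (e - d / c * d + (d / c) ^ 2 * c / 2)
      = 6 * c * (c ^ 3 / 24 + d ^ 2 / (2 * c) - e) := by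
  field_simp
  ring

theorem rank_zero_ch3_bound (c d e : ℝ) (hc : 0 < c)
    (hQ : ∀ α β : ℝ, 0 ≤ α → α ^ 2 + (β - d / c) ^ 2 ≤ c ^ 2 / 4 →
      α ^ 2 * c ^ 2 + 4 * (d - β * c) ^ 2
        - 6 * c * (e - β * d + β ^ 2 * c / 2) ≥ 0) :
    e ≤ c ^ 3 / 24 + d ^ 2 / (2 * c) := by
  have hapex := hQ (c / 2) (d / c) (by positivity) (by rw [sub_self, div_pow]; norm_num)
  rw [ge_iff_le, rankZero_quadraticForm_at_apex hc.ne'] at hapex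
  have := nonneg_of_mul_nonneg_right hapex (by positivity)
  linarith
end
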